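/- Let Z(x₁,x₂,x₃) = e^{x₃}·(x₁, x₂, 1−max(|x₁|,|x₂|)). Then there exists a constant K ≥ 1 such that at every point x = (x₁,x₂,x₃) with max(|x₁|,|x₂|) < 1 and |x₁| ≠ |x₂|, the map Z is differentiable and its derivative satisfies ‖DZ(x)‖³ ≤ K·|det DZ(x)| and |det DZ(x)| ≤ K·ℓ(DZ(x))³. -/

import Mathlib

/-!
Off the diagonals `|x₀| = |x₁|`, the function `max (|x₀|, |x₁|)` agrees near `x` with a linear
form `a x₀ + b x₁` where `(a, b)` is `(±1, 0)` or `(0, ±1)`. There `Z` is smooth and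
`DZ(x) = e^{x₂} A` for an explicit matrix `A` of determinant `1` whose entries, and those of its
inverse, are bounded by `2`. Hence `‖A‖, ‖A⁻¹‖ ≤ 6`, so `‖DZ(x)‖ ≤ 6 e^{x₂}`,
`ℓ(DZ(x)) ≥ e^{x₂} / 6` and `|det DZ(x)| = e^{3 x₂}`, which gives both inequalities with `K = 6³`.
-/

/-- The Nicks–Sixsmith (pyramid-type) Zorich map on the fundamental beam:
`Z(x₁,x₂,x₃) = e^{x₃}·(x₁, x₂, 1 − max(|x₁|,|x₂|))`. -/
noncomputable def Zmap (x : EuclideanSpace ℝ (Fin 3)) : EuclideanSpace ℝ (Fin 3) :=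
  (WithLp.equiv 2 (Fin 3 → ℝ)).symm
    ![Real.exp (x 2) * x 0, Real.exp (x 2) * x 1,
      Real.exp (x 2) * (1 - max |x 0| |x 1|)]

/-- `ℓ(L) = inf_{|h|=1} |L h|`, the minimal stretching of a linear map `L : ℝ³ → ℝ³`. -/
noncomputable def ell (L : EuclideanSpace ℝ (Fin 3) →L[ℝ] EuclideanSpace ℝ (Fin 3)) : ℝ :=
  ⨅ h : Metric.sphere (0 : EuclideanSpace ℝ (Fin 3)) 1, ‖L (h : EuclideanSpace ℝ (Fin 3))‖

open Real Filter Topology Matrix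

theorem eventually_abs_eq_sign_mul {t : ℝ} (ht : t ≠ 0) :
    ∀ᶠ s in 𝓝 t, |s| = Real.sign t * s := by
  rcases ht.lt_or_gt with ht | ht
  · filter_upwards [eventually_lt_nhds ht] with s hs
    rw [Real.sign_of_neg ht, abs_of_neg hs, neg_one_mul]
  · filter_upwards [eventually_gt_nhds ht] with s hs
    rw [Real.sign_of_pos ht, abs_of_pos hs, one_mul]

theorem abs_sign_le_one (t : ℝ) : |Real.sign t| ≤ 1 := by
  rcases Real.sign_apply_eq t with h | h | h <;> simp [h]

section MaxAbs

variable {X : Type*} [TopologicalSpace X] {f g : X → ℝ} {x : X}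

theorem eventually_max_abs_eq_sign_mul_of_abs_lt (hf : ContinuousAt f x) (hg : ContinuousAt g x)
    (hfg : |g x| < |f x|) : ∀ᶠ y in 𝓝 x, max |f y| |g y| = Real.sign (f x) * f y := by
  have hfx : f x ≠ 0 := abs_pos.1 ((abs_nonneg _).trans_lt hfg)
  filter_upwards [hg.abs.eventually_lt hf.abs hfg, hf.eventually (eventually_abs_eq_sign_mul hfx)]
    with y hlt heq
  rw [max_eq_left hlt.le, heq]

theorem exists_eventually_max_abs_eq_linear (hf : ContinuousAt f x) (hg : ContinuousAt g x)
    (hfg : |f x| ≠ |g x|) :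
    ∃ a b : ℝ, |a| ≤ 1 ∧ |b| ≤ 1 ∧ ∀ᶠ y in 𝓝 x, max |f y| |g y| = a * f y + b * g y := by
  rcases hfg.lt_or_gt with hlt | hlt
  · refine ⟨0, Real.sign (g x), by simp, abs_sign_le_one _, ?_⟩
    filter_upwards [eventually_max_abs_eq_sign_mul_of_abs_lt hg hf hlt] with y hy
    rw [max_comm, hy, zero_mul, zero_add]
  · refine ⟨Real.sign (f x), 0, abs_sign_le_one _, by simp, ?_⟩
    filter_upwards [eventually_max_abs_eq_sign_mul_of_abs_lt hf hg hlt] with y hy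
    rw [hy, zero_mul, add_zero]

end MaxAbs

section MatrixBounds

variable {n : Type*} [Fintype n] [DecidableEq n]

theorem Matrix.det_toEuclideanCLM (A : Matrix n n ℝ) :
    (toEuclideanCLM (𝕜 := ℝ) A).det = A.det := by
  rw [ContinuousLinearMap.det, coe_toEuclideanCLM_eq_toEuclideanLin,
    toEuclideanLin_eq_toLin_orthonormal, LinearMap.det_toLin]

theorem Matrix.norm_toEuclideanCLM_le_of_abs_le (A : Matrix n n ℝ) {c : ℝ} (hc : 0 ≤ c)
    (hA : ∀ i j, |A i j| ≤ c) : ‖toEuclideanCLM (𝕜 := ℝ) A‖ ≤ Fintype.card n * c := by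
  refine ContinuousLinearMap.opNorm_le_bound _ (by positivity) fun v => ?_
  have hrow (i : n) : (A *ᵥ v.ofLp) i ^ 2 ≤ Fintype.card n * c ^ 2 * ‖v‖ ^ 2 :=
    calc (A *ᵥ v.ofLp) i ^ 2 ≤ (∑ j, A i j ^ 2) * ∑ j, v j ^ 2 :=
          Finset.sum_mul_sq_le_sq_mul_sq _ _ _
      _ ≤ (∑ _j : n, c ^ 2) * ∑ j, v j ^ 2 := by
          gcongr ?_ * _
          exact Finset.sum_le_sum fun j _ => sq_le_sq' (abs_le.1 (hA i j)).1 (abs_le.1 (hA i j)).2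
      _ = _ := by simp [EuclideanSpace.norm_sq_eq]
  refine le_of_sq_le_sq ?_ (by positivity)
  calc ‖toEuclideanCLM (𝕜 := ℝ) A v‖ ^ 2 = ∑ i, (A *ᵥ v.ofLp) i ^ 2 := by
        simp [EuclideanSpace.norm_sq_eq]
    _ ≤ ∑ _i : n, Fintype.card n * c ^ 2 * ‖v‖ ^ 2 := Finset.sum_le_sum fun i _ => hrow i
    _ = _ := by simp; ring

end MatrixBounds

section Ell

variable {L : EuclideanSpace ℝ (Fin 3) →L[ℝ] EuclideanSpace ℝ (Fin 3)} {c : ℝ}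

theorem le_ell_of_forall_le (h : ∀ v, c * ‖v‖ ≤ ‖L v‖) : c ≤ ell L := by
  have := NormedSpace.sphere_nonempty_rclike (E := EuclideanSpace ℝ (Fin 3)) (𝕜 := ℝ) zero_le_one
  refine le_ciInf fun v => ?_
  simpa [norm_eq_of_mem_sphere v] using h v

theorem inv_le_ell_of_leftInverse {M : EuclideanSpace ℝ (Fin 3) →L[ℝ] EuclideanSpace ℝ (Fin 3)}
    (hML : Function.LeftInverse M L) (hc : 0 < c) (hM : ‖M‖ ≤ c) : c⁻¹ ≤ ell L := by
  refine le_ell_of_forall_le fun v => ?_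
  rw [inv_mul_le_iff₀ hc]
  calc ‖v‖ = ‖M (L v)‖ := by rw [hML v]
    _ ≤ ‖M‖ * ‖L v‖ := M.le_opNorm _
    _ ≤ c * ‖L v‖ := by gcongr

end Ell

theorem dilatation_smul_toEuclideanCLM {A B : Matrix (Fin 3) (Fin 3) ℝ} {e C : ℝ} (he : 0 < e)
    (hC : 0 < C) (hdet : A.det = 1) (hBA : B * A = 1) (hA : ‖toEuclideanCLM (𝕜 := ℝ) A‖ ≤ C)
    (hB : ‖toEuclideanCLM (𝕜 := ℝ) B‖ ≤ C) :
    ‖e • toEuclideanCLM (𝕜 := ℝ) A‖ ^ 3 ≤ C ^ 3 * |(e • toEuclideanCLM (𝕜 := ℝ) A).det| ∧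
      |(e • toEuclideanCLM (𝕜 := ℝ) A).det| ≤ C ^ 3 * ell (e • toEuclideanCLM (𝕜 := ℝ) A) ^ 3 := by
  have hdetL : |(e • toEuclideanCLM (𝕜 := ℝ) A).det| = e ^ 3 := by
    rw [ContinuousLinearMap.det, ContinuousLinearMap.toLinearMap_smul, LinearMap.det_smul,
      finrank_euclideanSpace_fin, ← ContinuousLinearMap.det, det_toEuclideanCLM, hdet, mul_one,
      abs_of_pos (by positivity)]
  have hnorm : ‖e • toEuclideanCLM (𝕜 := ℝ) A‖ ≤ e * C := by
    rw [norm_smul, norm_of_nonneg he.le]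
    gcongr
  have hleft : Function.LeftInverse ⇑(e⁻¹ • toEuclideanCLM (𝕜 := ℝ) B)
      ⇑(e • toEuclideanCLM (𝕜 := ℝ) A) := fun v => by
    have hv : toEuclideanCLM (𝕜 := ℝ) B (toEuclideanCLM (𝕜 := ℝ) A v) = v := by
      rw [← mul_apply_eq_comp, ← map_mul, hBA, map_one, one_apply_eq_self]
    simp [hv, he.ne']
  have hell : e / C ≤ ell (e • toEuclideanCLM (𝕜 := ℝ) A) := by
    have := inv_le_ell_of_leftInverse hleft (by positivity) (c := C / e) <| by
      rw [norm_smul, norm_inv, norm_of_nonneg he.le, inv_mul_eq_div]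
      gcongr
    rwa [inv_div] at this
  rw [hdetL]
  constructor
  · calc ‖e • toEuclideanCLM (𝕜 := ℝ) A‖ ^ 3 ≤ (e * C) ^ 3 := by gcongr
      _ = C ^ 3 * e ^ 3 := by ring
  · calc e ^ 3 = C ^ 3 * (e / C) ^ 3 := by field_simp
      _ ≤ C ^ 3 * ell (e • toEuclideanCLM (𝕜 := ℝ) A) ^ 3 := by gcongr

/-- The matrix of `e^{-x₂} DZ(x)` at `(p, q) = (x₀, x₁)` when `max (|y₀|, |y₁|) = a y₀ + b y₁`
near `x`. -/
def pyramidMatrix (a b p q : ℝ) : Matrix (Fin 3) (Fin 3) ℝ :=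
  !![1, 0, p; 0, 1, q; -a, -b, 1 - (a * p + b * q)]

def pyramidMatrixInv (a b p q : ℝ) : Matrix (Fin 3) (Fin 3) ℝ :=
  !![1 - p * a, -(p * b), -p; -(q * a), 1 - q * b, -q; a, b, 1]

theorem det_pyramidMatrix (a b p q : ℝ) : (pyramidMatrix a b p q).det = 1 := by
  simp [pyramidMatrix, det_fin_three]
  ring

theorem pyramidMatrixInv_mul (a b p q : ℝ) :
    pyramidMatrixInv a b p q * pyramidMatrix a b p q = 1 := by
  ext i j
  fin_cases i <;> fin_cases j <;>
    simp [pyramidMatrixInv, pyramidMatrix, mul_apply, Fin.sum_univ_three] <;> ring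

section PyramidMatrixNorm

variable {a b p q : ℝ} (ha : |a| ≤ 1) (hb : |b| ≤ 1) (hp : |p| ≤ 1) (hq : |q| ≤ 1)
include ha hb hp hq

theorem norm_toEuclideanCLM_pyramidMatrix_le (hm : |a * p + b * q| ≤ 1) :
    ‖toEuclideanCLM (𝕜 := ℝ) (pyramidMatrix a b p q)‖ ≤ 6 := by
  refine (norm_toEuclideanCLM_le_of_abs_le _ zero_le_two fun i j => ?_).trans_eq (by norm_num)
  rw [abs_le] at *
  fin_cases i <;> fin_cases j <;> refine ⟨?_, ?_⟩ <;> simp [pyramidMatrix] <;> linarith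

theorem norm_toEuclideanCLM_pyramidMatrixInv_le :
    ‖toEuclideanCLM (𝕜 := ℝ) (pyramidMatrixInv a b p q)‖ ≤ 6 := by
  refine (norm_toEuclideanCLM_le_of_abs_le _ zero_le_two fun i j => ?_).trans_eq (by norm_num)
  rw [abs_le] at *
  fin_cases i <;> fin_cases j <;> refine ⟨?_, ?_⟩ <;> simp [pyramidMatrixInv] <;> nlinarith

end PyramidMatrixNorm

noncomputable def pyramidModel (a b : ℝ) (y : EuclideanSpace ℝ (Fin 3)) :
    EuclideanSpace ℝ (Fin 3) :=
  (WithLp.equiv 2 (Fin 3 → ℝ)).symm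
    ![exp (y 2) * y 0, exp (y 2) * y 1, exp (y 2) * (1 - (a * y 0 + b * y 1))]

theorem hasFDerivAt_pyramidModel (a b : ℝ) (x : EuclideanSpace ℝ (Fin 3)) :
    HasFDerivAt (pyramidModel a b)
      (exp (x 2) • toEuclideanCLM (𝕜 := ℝ) (pyramidMatrix a b (x 0) (x 1))) x := by
  rw [← hasFDerivWithinAt_univ, hasFDerivWithinAt_piLp]
  intro i
  rw [hasFDerivWithinAt_univ]
  have hproj (j : Fin 3) := PiLp.hasFDerivAt_apply (𝕜 := ℝ) 2 x j
  have hexp := (hproj 2).exp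
  have hlin := (((hproj 0).const_mul a).add ((hproj 1).const_mul b)).const_sub 1
  fin_cases i <;>
    [apply (hexp.mul (hproj 0)).congr_fderiv; apply (hexp.mul (hproj 1)).congr_fderiv;
      apply (hexp.mul hlin).congr_fderiv] <;>
    ext v <;> simp [pyramidMatrix, mulVec, dotProduct, Fin.sum_univ_three] <;> ring

/-- There is `K ≥ 1` such that at every point of the open fundamental beam off the
diagonals, `Z` is differentiable and satisfies the quasiregularity dilatation
inequalities `‖DZ(x)‖³ ≤ K·|det DZ(x)|` and `|det DZ(x)| ≤ K·ℓ(DZ(x))³`. -/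
theorem Zmap_dilatation : ∃ K : ℝ, 1 ≤ K ∧
    ∀ x : EuclideanSpace ℝ (Fin 3), max |x 0| |x 1| < 1 → |x 0| ≠ |x 1| →
      DifferentiableAt ℝ Zmap x ∧
      ‖fderiv ℝ Zmap x‖ ^ 3 ≤ K * |(fderiv ℝ Zmap x).det| ∧
      |(fderiv ℝ Zmap x).det| ≤ K * ell (fderiv ℝ Zmap x) ^ 3 := by
  refine ⟨6 ^ 3, by norm_num, fun x hx hne => ?_⟩
  obtain ⟨a, b, ha, hb, hlin⟩ := exists_eventually_max_abs_eq_linear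
    (f := fun y : EuclideanSpace ℝ (Fin 3) => y 0) (g := fun y => y 1)
    (by fun_prop) (by fun_prop) hne
  have hD : HasFDerivAt Zmap _ x := (hasFDerivAt_pyramidModel a b x).congr_of_eventuallyEq <| by
    filter_upwards [hlin] with y hy
    simp only [Zmap, pyramidModel, hy]
  have hp : |x 0| ≤ 1 := (le_max_left _ _).trans hx.le
  have hq : |x 1| ≤ 1 := (le_max_right _ _).trans hx.le
  have hm : |a * x 0 + b * x 1| ≤ 1 := by
    rw [← hlin.self_of_nhds, abs_of_nonneg (by positivity)]
    exact hx.le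
  rw [hD.fderiv]
  exact ⟨hD.differentiableAt, dilatation_smul_toEuclideanCLM (exp_pos _) (by norm_num)
    (det_pyramidMatrix _ _ _ _) (pyramidMatrixInv_mul _ _ _ _)
    (norm_toEuclideanCLM_pyramidMatrix_le ha hb hp hq hm)
    (norm_toEuclideanCLM_pyramidMatrixInv_le ha hb hp hq)⟩
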